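/- arXiv:1709.03859 — 5 statements merged into one kernel-verified Lean document; each statement's English description precedes it below -/
import Mathlib

section
/- If ψ is a translation on a graph G with associated digraph D_ψ, then the inverse function ψ^{-1} (obtained by reversing all directed edges of D_ψ) is also a translation on G, and loss(ψ) = loss(ψ^{-1}). -/
open Finset

def IsTransformation {V : Type*} (φ : V → Option V) : Prop :=
  ∀ v1 v2 w : V, φ v1 = some w → φ v2 = some w → v1 = v2

def IsEC {V : Type*} (G : SimpleGraph V) (φ : V → Option V) : Prop :=
  ∀ v w : V, φ v = some w → G.Adj v w

def IsSNP {V : Type*} (G : SimpleGraph V) (φ : V → Option V) : Prop :=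
  ∀ v1 v2 w1 w2 : V, φ v1 = some w1 → φ v2 = some w2 → (G.Adj v1 v2 ↔ G.Adj w1 w2)

def IsTranslation {V : Type*} (G : SimpleGraph V) (φ : V → Option V) : Prop :=
  IsTransformation φ ∧ IsEC G φ ∧ IsSNP G φ

def loss {V : Type*} [Fintype V] [DecidableEq V] (φ : V → Option V) : ℕ :=
  (Finset.univ.filter (fun v => φ v = none)).card

def Prec {V : Type*} [Fintype V] [DecidableEq V] (φ1 φ2 : V → Option V) : Prop :=
  loss φ2 < loss φ1 ∧ ∃ v w : V, φ1 v = some w ∧ φ2 v = some w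

def IsMinimalTranslation {V : Type*} [Fintype V] [DecidableEq V]
    (G : SimpleGraph V) (φ : V → Option V) : Prop :=
  IsTranslation G φ ∧ ∀ φ2 : V → Option V, IsTranslation G φ2 → ¬ Prec φ φ2

section Inverse

variable {V : Type*} {ψ ψinv : V → Option V}

lemma IsTransformation.of_inverse (hinv : ∀ v w : V, ψinv w = some v ↔ ψ v = some w) :
    IsTransformation ψinv := fun w1 w2 v h1 h2 =>
  Option.some_injective _ (((hinv v w1).mp h1).symm.trans ((hinv v w2).mp h2))

lemma IsEC.of_inverse {G : SimpleGraph V} (hψ : IsEC G ψ)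
    (hinv : ∀ v w : V, ψinv w = some v ↔ ψ v = some w) : IsEC G ψinv :=
  fun w v h => (hψ v w ((hinv v w).mp h)).symm

lemma IsSNP.of_inverse {G : SimpleGraph V} (hψ : IsSNP G ψ)
    (hinv : ∀ v w : V, ψinv w = some v ↔ ψ v = some w) : IsSNP G ψinv :=
  fun w1 w2 v1 v2 h1 h2 => (hψ v1 v2 w1 w2 ((hinv v1 w1).mp h1) ((hinv v2 w2).mp h2)).symm

lemma IsTranslation.of_inverse {G : SimpleGraph V} (hψ : IsTranslation G ψ)
    (hinv : ∀ v w : V, ψinv w = some v ↔ ψ v = some w) : IsTranslation G ψinv :=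
  ⟨.of_inverse hinv, hψ.2.1.of_inverse hinv, hψ.2.2.of_inverse hinv⟩

lemma card_isSome_eq_of_inverse [Fintype V]
    (hinv : ∀ v w : V, ψinv w = some v ↔ ψ v = some w) :
    #{v | (ψ v).isSome} = #{w | (ψinv w).isSome} := by
  -- On the supports the default of `getD` is never used, so these maps are `ψ` and `ψinv`.
  refine card_nbij' (fun v => (ψ v).getD v) (fun w => (ψinv w).getD w) ?_ ?_ ?_ ?_ <;>
    intro x hx <;> obtain ⟨y, hy⟩ := Option.isSome_iff_exists.mp (by simpa using hx)
  exacts [by simp [hy, (hinv x y).mpr hy], by simp [hy, (hinv y x).mp hy],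
    by simp [hy, (hinv x y).mpr hy], by simp [hy, (hinv y x).mp hy]]

lemma loss_add_card_isSome [Fintype V] [DecidableEq V] (φ : V → Option V) :
    loss φ + #{v | (φ v).isSome} = Fintype.card V := by
  simpa [loss, Option.isSome_iff_ne_none] using
    card_filter_add_card_filter_not (s := univ) (fun v => φ v = none)

end Inverse

theorem stmt_7 {V : Type*} [Fintype V] [DecidableEq V] (G : SimpleGraph V)
    (ψ ψinv : V → Option V) (hψ : IsTranslation G ψ)
    (hinv : ∀ v w : V, ψinv w = some v ↔ ψ v = some w) :
    IsTranslation G ψinv ∧ loss ψ = loss ψinv := by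
  refine ⟨hψ.of_inverse hinv, ?_⟩
  have := loss_add_card_isSome ψ
  have := loss_add_card_isSome ψinv
  have := card_isSome_eq_of_inverse hinv
  omega
end

section
/- Every lossless translation on a graph is an isometry with respect to the geodesic distance. -/
open Finset

lemma edist_iso_aux {V : Type*} {G : SimpleGraph V} (e : G ≃g G) (u v : V) :
    G.edist (e u) (e v) = G.edist u v := by
  apply le_antisymm
  · refine le_iInf fun p => ?_
    simpa [SimpleGraph.Walk.length_map] using SimpleGraph.edist_le (p.map e.toHom)
  · refine le_iInf fun p => ?_
    have := SimpleGraph.edist_le (p.map e.symm.toHom)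
    simpa [SimpleGraph.Walk.length_map] using this

theorem stmt_10 {V : Type*} [Finite V] (G : SimpleGraph V)
    (φ : V → Option V) (f : V → V)
    (hT : IsTranslation G φ) (hf : ∀ v : V, φ v = some (f v)) :
    ∀ v1 v2 : V, G.edist v1 v2 = G.edist (f v1) (f v2) := by
  intro v1 v2
  obtain ⟨hinj, hec, hsnp⟩ := hT
  have hfi : Function.Injective f := fun a b h => hinj a b (f a) (hf a) (h ▸ hf b)
  have hfb : Function.Bijective f := Finite.injective_iff_bijective.mp hfi
  let e : G ≃g G := ⟨Equiv.ofBijective f hfb, fun {a b} =>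
    (hsnp a b (f a) (f b) (hf a) (hf b)).symm⟩
  exact (edist_iso_aux e v1 v2).symm
end

section
/- The relation ≺ on translations of a graph, defined by ψ1 ≺ ψ2 iff loss(ψ1) > loss(ψ2) and ψ1, ψ2 agree on at least one vertex (with common image ≠⊥), is irreflexive and antisymmetric, but not transitive in general (there exists a graph and translations ψ1, ψ2, ψ3 with ψ1 ≺ ψ2 and ψ2 ≺ ψ3 but not ψ1 ≺ ψ3). -/
open Finset

theorem stmt_13 :
    (∀ (V : Type) (inst : Fintype V) (instD : DecidableEq V) (G : SimpleGraph V)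
        (ψ : V → Option V), IsTranslation G ψ → ¬ @Prec V inst instD ψ ψ) ∧
    (∀ (V : Type) (inst : Fintype V) (instD : DecidableEq V) (G : SimpleGraph V)
        (ψ1 ψ2 : V → Option V), IsTranslation G ψ1 → IsTranslation G ψ2 →
        @Prec V inst instD ψ1 ψ2 → ¬ @Prec V inst instD ψ2 ψ1) ∧
    (∃ (V : Type) (inst : Fintype V) (instD : DecidableEq V) (G : SimpleGraph V)
        (ψ1 ψ2 ψ3 : V → Option V),
        IsTranslation G ψ1 ∧ IsTranslation G ψ2 ∧ IsTranslation G ψ3 ∧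
        @Prec V inst instD ψ1 ψ2 ∧ @Prec V inst instD ψ2 ψ3 ∧
        ¬ @Prec V inst instD ψ1 ψ3) := by
  refine ⟨?_, ?_, ?_⟩
  · intro V _ _ G ψ _ h
    exact absurd h.1 (lt_irrefl _)
  · intro V _ _ G ψ1 ψ2 _ _ h12 h21
    exact absurd (h12.1.trans h21.1) (lt_irrefl _)
  · refine ⟨Fin 4, inferInstance, inferInstance, ⊤,
      ![some 2, none, some 0, none],
      ![some 1, none, some 0, some 2],
      ![some 1, some 0, some 3, some 2], ?_, ?_, ?_, ?_, ?_, ?_⟩ <;>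
    · simp only [IsTranslation, IsTransformation, IsEC, IsSNP, Prec, loss]
      decide
end

section
/- On a D-dimensional torus graph with all dimensions at least 5, the set of lossless translations consists exactly of the shifts v ↦ v + e_i and v ↦ v − e_i for i ∈ {1,...,D}; consequently the monoid generated by lossless translations under composition is exactly the set of Euclidean translations v ↦ v + δ for δ ∈ ℤ/d[1] × ... × ℤ/d[D]. -/
open Finset

def torusDirac (D : ℕ) (d : Fin D → ℕ) (j : Fin D) : ∀ i, ZMod (d i) :=
  fun i => if i = j then 1 else 0

def torusGraph (D : ℕ) (d : Fin D → ℕ) : SimpleGraph (∀ i, ZMod (d i)) :=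
  SimpleGraph.fromRel (fun v w => ∃ j, w = v + torusDirac D d j)

def IsLosslessTranslationTorus (D : ℕ) (d : Fin D → ℕ)
    (ψ : (∀ i, ZMod (d i)) → (∀ i, ZMod (d i))) : Prop :=
  Function.Bijective ψ ∧ (∀ v, (torusGraph D d).Adj v (ψ v)) ∧
    (∀ v w, (torusGraph D d).Adj v w ↔ (torusGraph D d).Adj (ψ v) (ψ w))

namespace Stmt16

variable {D : ℕ} {d : Fin D → ℕ}

def IsUnitVec (D : ℕ) (d : Fin D → ℕ) (s : ∀ i, ZMod (d i)) : Prop :=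
  ∃ j, ∃ σ : ℤ, (σ = 1 ∨ σ = -1) ∧ s = σ • torusDirac D d j

lemma dirac_apply_self (j : Fin D) : torusDirac D d j j = 1 := by
  simp [torusDirac]

lemma dirac_apply_ne {i j : Fin D} (h : i ≠ j) : torusDirac D d j i = 0 := by
  simp [torusDirac, h]

lemma smul_dirac_apply_self (σ : ℤ) (j : Fin D) :
    (σ • torusDirac D d j) j = (σ : ZMod (d j)) := by
  simp [torusDirac]

lemma smul_dirac_apply_ne (σ : ℤ) {i j : Fin D} (h : i ≠ j) :
    (σ • torusDirac D d j) i = 0 := by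
  simp [torusDirac, h]

lemma intCast_ne_zero (hd : ∀ i, 5 ≤ d i) (i : Fin D) {c : ℤ} (h1 : c ≠ 0)
    (h2 : c.natAbs < 5) : (c : ZMod (d i)) ≠ 0 := by
  haveI : NeZero (d i) := ⟨by have := hd i; omega⟩
  intro h
  rw [ZMod.intCast_zmod_eq_zero_iff_dvd] at h
  have h3 : d i ∣ c.natAbs := Int.natAbs_dvd_natAbs.mpr (by exact_mod_cast h)
  have h4 := Nat.le_of_dvd (by omega) h3
  have := hd i
  omega


lemma not_unit_two_coords {x : ∀ i, ZMod (d i)} (hu : IsUnitVec D d x)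
    {i1 i2 : Fin D} (h12 : i1 ≠ i2) (h1 : x i1 ≠ 0) (h2 : x i2 ≠ 0) : False := by
  obtain ⟨m, ρ, hρ, hx⟩ := hu
  subst hx
  by_cases hm1 : i1 = m
  · by_cases hm2 : i2 = m
    · exact h12 (hm1.trans hm2.symm)
    · exact h2 (smul_dirac_apply_ne ρ hm2)
  · exact h1 (smul_dirac_apply_ne ρ hm1)

lemma adj_iff (hd : ∀ i, 5 ≤ d i) (v w : ∀ i, ZMod (d i)) :
    (torusGraph D d).Adj v w ↔ IsUnitVec D d (w - v) := by
  rw [torusGraph, SimpleGraph.fromRel_adj]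
  constructor
  · rintro ⟨hne, (⟨j, hj⟩ | ⟨j, hj⟩)⟩
    · exact ⟨j, 1, Or.inl rfl, by rw [one_smul]; rw [hj]; abel⟩
    · refine ⟨j, -1, Or.inr rfl, ?_⟩
      rw [hj]
      funext i
      simp only [Pi.sub_apply, Pi.add_apply, Pi.smul_apply, neg_smul, one_smul, Pi.neg_apply]
      abel
  · rintro ⟨j, σ, hσ, hs⟩
    have hne : v ≠ w := by
      intro h
      subst h
      have := congrFun hs j
      rw [sub_self, smul_dirac_apply_self] at this
      exact intCast_ne_zero hd j (by rcases hσ with h|h <;> simp [h])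
        (by rcases hσ with h|h <;> simp [h]) this.symm
    refine ⟨hne, ?_⟩
    rcases hσ with h|h
    · subst h; left; exact ⟨j, by rw [one_smul] at hs; rw [← hs]; abel⟩
    · subst h; right
      refine ⟨j, ?_⟩
      funext i
      have := congrFun hs i
      simp only [Pi.sub_apply, Pi.smul_apply, neg_smul, one_smul, Pi.neg_apply] at this
      simp only [Pi.add_apply]
      linear_combination -this


lemma unit_smul_elim (hd : ∀ i, 5 ≤ d i) {j : Fin D} {c : ℤ}
    (h : IsUnitVec D d (c • torusDirac D d j)) :
    ∃ ρ : ℤ, (ρ = 1 ∨ ρ = -1) ∧ ((c - ρ : ℤ) : ZMod (d j)) = 0 := by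
  obtain ⟨m, ρ, hρ, hx⟩ := h
  by_cases hm : m = j
  · subst hm
    have := congrFun hx m
    rw [smul_dirac_apply_self, smul_dirac_apply_self] at this
    refine ⟨ρ, hρ, ?_⟩
    push_cast
    rw [sub_eq_zero]
    exact this
  · have := congrFun hx m
    rw [smul_dirac_apply_ne c (Ne.symm (fun h => hm h.symm)), smul_dirac_apply_self] at this
    exact absurd this.symm (intCast_ne_zero hd m
      (by rcases hρ with h|h <;> simp [h]) (by rcases hρ with h|h <;> simp [h]))

lemma line_lemma (hd : ∀ i, 5 ≤ d i) {s t : ∀ i, ZMod (d i)}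
    (hs : IsUnitVec D d s) (ht : IsUnitVec D d t)
    (h : IsUnitVec D d ((2:ℤ) • s - t)) : t = s := by
  obtain ⟨j, σ, hσ, hsj⟩ := hs
  obtain ⟨k, τ, hτ, htk⟩ := ht
  by_cases hjk : k = j
  · subst hjk
    by_cases hts : τ = σ
    · rw [htk, hsj, hts]
    · exfalso
      have hx : (2:ℤ) • s - t = (2 * σ - τ) • torusDirac D d k := by
        rw [hsj, htk, sub_smul, mul_smul]
      rw [hx] at h
      obtain ⟨ρ, hρ, hc⟩ := unit_smul_elim hd h
      refine intCast_ne_zero hd k (c := 2 * σ - τ - ρ) ?_ ?_ hc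
      · rcases hσ with h1|h1 <;> rcases hτ with h2|h2 <;> rcases hρ with h3|h3 <;>
          simp [h1, h2, h3] at hts ⊢
      · rcases hσ with h1|h1 <;> rcases hτ with h2|h2 <;> rcases hρ with h3|h3 <;>
          simp [h1, h2, h3] at hts ⊢
  · exfalso
    subst hsj htk
    refine not_unit_two_coords h (i1 := j) (i2 := k) (fun hh => hjk hh.symm) ?_ ?_
    · have hv : ((2:ℤ) • (σ • torusDirac D d j) - τ • torusDirac D d k) j
          = ((2 * σ : ℤ) : ZMod (d j)) := by
        have h1 : j ≠ k := fun hh => hjk hh.symm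
        simp [torusDirac, hjk, h1, smul_smul]
      rw [hv]
      exact intCast_ne_zero hd j (by rcases hσ with h1|h1 <;> simp [h1])
        (by rcases hσ with h1|h1 <;> simp [h1])
    · have hv : ((2:ℤ) • (σ • torusDirac D d j) - τ • torusDirac D d k) k
          = ((-τ : ℤ) : ZMod (d k)) := by
        have h1 : j ≠ k := fun hh => hjk hh.symm
        simp [torusDirac, hjk, h1, smul_smul]
      rw [hv]
      exact intCast_ne_zero hd k (by rcases hτ with h1|h1 <;> simp [h1])
        (by rcases hτ with h1|h1 <;> simp [h1])


lemma cross_lemma (hd : ∀ i, 5 ≤ d i) {j k l : Fin D} {σ τ ε : ℤ}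
    (hσ : σ = 1 ∨ σ = -1) (hτ : τ = 1 ∨ τ = -1) (hε : ε = 1 ∨ ε = -1)
    (hlj : l ≠ j)
    (h : IsUnitVec D d (ε • torusDirac D d l + τ • torusDirac D d k
          - σ • torusDirac D d j)) :
    τ • torusDirac D d k = σ • torusDirac D d j ∨
      τ • torusDirac D d k = -(ε • torusDirac D d l) := by
  set x := ε • torusDirac D d l + τ • torusDirac D d k - σ • torusDirac D d j with hx
  by_cases hkj : k = j
  · subst hkj
    by_cases hts : τ = σ
    · left; rw [hts]
    · exfalso
      refine not_unit_two_coords h (i1 := l) (i2 := k) hlj ?_ ?_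
      · have hv : x l = ((ε : ℤ) : ZMod (d l)) := by
          simp [hx, torusDirac, hlj, smul_smul]
        rw [hv]
        exact intCast_ne_zero hd l (by rcases hε with h1|h1 <;> simp [h1])
          (by rcases hε with h1|h1 <;> simp [h1])
      · have hv : x k = ((τ - σ : ℤ) : ZMod (d k)) := by
          have h1 : k ≠ l := fun hh => hlj hh.symm
          simp [hx, torusDirac, h1, smul_smul]
        rw [hv]
        exact intCast_ne_zero hd k
          (by rcases hτ with h1|h1 <;> rcases hσ with h2|h2 <;> simp [h1, h2] at hts ⊢)
          (by rcases hτ with h1|h1 <;> rcases hσ with h2|h2 <;> simp [h1, h2] at hts ⊢)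
  · by_cases hkl : k = l
    · subst hkl
      by_cases hte : τ = -ε
      · right; rw [hte, neg_smul]
      · exfalso
        refine not_unit_two_coords h (i1 := k) (i2 := j) hlj ?_ ?_
        · have hv : x k = ((ε + τ : ℤ) : ZMod (d k)) := by
            simp [hx, torusDirac, hlj, smul_smul]
          rw [hv]
          exact intCast_ne_zero hd k
            (by rcases hτ with h1|h1 <;> rcases hε with h2|h2 <;> simp [h1, h2] at hte ⊢)
            (by rcases hτ with h1|h1 <;> rcases hε with h2|h2 <;> simp [h1, h2] at hte ⊢)
        · have hv : x j = ((-σ : ℤ) : ZMod (d j)) := by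
            have h1 : j ≠ k := fun hh => hlj hh.symm
            simp [hx, torusDirac, h1, smul_smul]
          rw [hv]
          exact intCast_ne_zero hd j (by rcases hσ with h1|h1 <;> simp [h1])
            (by rcases hσ with h1|h1 <;> simp [h1])
    · exfalso
      refine not_unit_two_coords h (i1 := k) (i2 := j) hkj ?_ ?_
      · have hv : x k = ((τ : ℤ) : ZMod (d k)) := by
          have h1 : k ≠ l := hkl
          simp [hx, torusDirac, h1, hkj, smul_smul]
        rw [hv]
        exact intCast_ne_zero hd k (by rcases hτ with h1|h1 <;> simp [h1])
          (by rcases hτ with h1|h1 <;> simp [h1])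
      · have hv : x j = ((-σ : ℤ) : ZMod (d j)) := by
          have h1 : j ≠ k := fun hh => hkj hh.symm
          have h2 : j ≠ l := fun hh => hlj hh.symm
          simp [hx, torusDirac, h1, h2, smul_smul]
        rw [hv]
        exact intCast_ne_zero hd j (by rcases hσ with h1|h1 <;> simp [h1])
          (by rcases hσ with h1|h1 <;> simp [h1])


lemma forward (hd : ∀ i, 5 ≤ d i) {ψ : (∀ i, ZMod (d i)) → (∀ i, ZMod (d i))}
    (h : IsLosslessTranslationTorus D d ψ) :
    ∃ j, (ψ = fun v => v + torusDirac D d j) ∨ (ψ = fun v => v - torusDirac D d j) := by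
  obtain ⟨hbij, hadj, hpres⟩ := h
  set δ : (∀ i, ZMod (d i)) → (∀ i, ZMod (d i)) := fun v => ψ v - v with hδ
  have hψ : ∀ v, ψ v = v + δ v := by intro v; simp [hδ]
  have hunit : ∀ v, IsUnitVec D d (δ v) := fun v => (adj_iff hd v (ψ v)).mp (hadj v)
  -- Step B
  have hB : ∀ v, δ (v - δ v) = δ v := by
    intro v
    have hadjvw : (torusGraph D d).Adj (v - δ v) v :=
      (adj_iff hd _ _).mpr (by rw [sub_sub_cancel]; exact hunit v)
    have hA := (hpres _ _).mp hadjvw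
    rw [adj_iff hd] at hA
    have key : ψ v - ψ (v - δ v) = (2:ℤ) • δ v - δ (v - δ v) := by
      rw [hψ v, hψ (v - δ v)]; abel
    rw [key] at hA
    exact line_lemma hd (hunit _) (hunit _) hA
  -- iterate B
  have hiter : ∀ v (n : ℕ), δ (v - n • δ v) = δ v := by
    intro v n
    induction n with
    | zero => simp
    | succ n ih =>
      have h2 := hB (v - n • δ v)
      rw [ih] at h2
      have h3 : v - (n + 1) • δ v = v - n • δ v - δ v := by rw [succ_nsmul]; abel
      rw [h3, h2]
  -- Step C
  have hC : ∀ v, δ (v + δ v) = δ v := by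
    intro v
    obtain ⟨j, σ, hσ, hs⟩ := hunit v
    have h0 : (d j) • δ v = 0 := by
      rw [hs]
      funext i
      by_cases hij : i = j
      · subst hij
        simp [torusDirac, nsmul_eq_mul, smul_smul, ZMod.natCast_self]
      · simp [torusDirac, hij]
    have h2 : ((d j - 1) + 1) • δ v = 0 := by
      rw [show (d j - 1) + 1 = d j by have := hd j; omega]
      exact h0
    rw [succ_nsmul] at h2
    have h3 : (d j - 1) • δ v = -δ v := eq_neg_of_add_eq_zero_left h2
    have h4 : v + δ v = v - (d j - 1) • δ v := by rw [h3, sub_neg_eq_add]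
    rw [h4]
    exact hiter v (d j - 1)
  -- Step D
  have hD : ∀ v u, IsUnitVec D d u → δ (v + u) = δ v := by
    intro v u hu
    obtain ⟨l, ε, hε, hul⟩ := hu
    obtain ⟨j, σ, hσ, hsj⟩ := hunit v
    by_cases hlj : l = j
    · subst hlj
      by_cases hes : ε = σ
      · have huv : u = δ v := by rw [hul, hsj, hes]
        rw [huv]; exact hC v
      · have hns : ε = -σ := by rcases hε with h1|h1 <;> rcases hσ with h2|h2 <;> omega
        have huv : u = -δ v := by rw [hul, hsj, hns, neg_smul]
        rw [huv, ← sub_eq_add_neg]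
        exact hB v
    · obtain ⟨k, τ, hτ, htk⟩ := hunit (v + u)
      have hadjv : (torusGraph D d).Adj v (v + u) :=
        (adj_iff hd _ _).mpr (by rw [add_sub_cancel_left]; exact ⟨l, ε, hε, hul⟩)
      have hA := (hpres _ _).mp hadjv
      rw [adj_iff hd] at hA
      have key : ψ (v + u) - ψ v = ε • torusDirac D d l + τ • torusDirac D d k
          - σ • torusDirac D d j := by
        rw [hψ, hψ, ← htk, ← hsj, ← hul]; abel
      rw [key] at hA
      rcases cross_lemma hd hσ hτ hε hlj hA with hcase | hcase
      · rw [htk, hcase, ← hsj]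
      · exfalso
        have hminus : δ (v + u) = -u := by rw [htk, hcase, hul]
        have h1 : ψ (v + u) = v := by rw [hψ, hminus]; abel
        have h2 : ψ (v - δ v) = v := by rw [hψ, hB]; abel
        have h3 := hbij.1 (h1.trans h2.symm)
        have h4 : u = -δ v := by
          have h5 : v + u = v + -δ v := by rw [h3, sub_eq_add_neg]
          exact add_left_cancel h5
        rw [hul, hsj] at h4
        have h5 := congrFun h4 l
        rw [smul_dirac_apply_self, Pi.neg_apply, smul_dirac_apply_ne σ hlj, neg_zero] at h5
        exact intCast_ne_zero hd l (by rcases hε with h1|h1 <;> simp [h1])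
          (by rcases hε with h1|h1 <;> simp [h1]) h5
  -- constancy
  have hnat : ∀ (w : ∀ i, ZMod (d i)) (j : Fin D) (n : ℕ),
      δ (w + n • torusDirac D d j) = δ w := by
    intro w j n
    induction n with
    | zero => simp
    | succ n ih =>
      have h3 : w + (n + 1) • torusDirac D d j
          = (w + n • torusDirac D d j) + torusDirac D d j := by rw [succ_nsmul]; abel
      rw [h3, hD _ _ ⟨j, 1, Or.inl rfl, (one_smul _ _).symm⟩]
      exact ih
  have hsupp : ∀ s : Finset (Fin D), ∀ v : (∀ i, ZMod (d i)),
      (∀ i ∉ s, v i = 0) → δ v = δ 0 := by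
    intro s
    induction s using Finset.induction_on with
    | empty =>
      intro v hv
      have : v = 0 := funext fun i => hv i (Finset.notMem_empty i)
      rw [this]
    | @insert j s hj ih =>
      intro v hv
      set v' := Function.update v j 0 with hv'def
      have hv's : ∀ i ∉ s, v' i = 0 := by
        intro i hi
        by_cases hij : i = j
        · subst hij; simp [hv'def]
        · rw [hv'def, Function.update_of_ne hij]
          exact hv i (by simp [hij, hi])
      have hvv : v = v' + (v j).val • torusDirac D d j := by
        haveI : NeZero (d j) := ⟨by have := hd j; omega⟩
        funext i
        by_cases hij : i = j
        · subst hij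
          rw [Pi.add_apply, hv'def, Function.update_self, zero_add, Pi.smul_apply,
            dirac_apply_self, nsmul_eq_mul, mul_one]
          exact (ZMod.natCast_rightInverse (v i)).symm
        · simp [hv'def, Function.update_of_ne hij, torusDirac, hij]
      rw [hvv, hnat]
      exact ih v' hv's
  have hconst : ∀ v, δ v = δ 0 := fun v => hsupp Finset.univ v (by simp)
  obtain ⟨j, σ, hσ, hs0⟩ := hunit 0
  refine ⟨j, ?_⟩
  rcases hσ with h1|h1
  · left
    funext v
    rw [hψ, hconst, hs0, h1, one_smul]
  · right
    funext v
    rw [hψ, hconst, hs0, h1, neg_smul, one_smul, ← sub_eq_add_neg]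


lemma shift_lossless (hd : ∀ i, 5 ≤ d i) {c : ∀ i, ZMod (d i)} (hc : IsUnitVec D d c) :
    IsLosslessTranslationTorus D d (fun v => v + c) := by
  refine ⟨(Equiv.addRight c).bijective, fun v => ?_, fun v w => ?_⟩
  · rw [adj_iff hd, add_sub_cancel_left]
    exact hc
  · show (torusGraph D d).Adj v w ↔ (torusGraph D d).Adj (v + c) (w + c)
    rw [adj_iff hd, adj_iff hd (v + c), add_sub_add_right_eq_sub]

lemma unit_dirac (j : Fin D) : IsUnitVec D d (torusDirac D d j) :=
  ⟨j, 1, Or.inl rfl, (one_smul _ _).symm⟩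

lemma unit_neg_dirac (j : Fin D) : IsUnitVec D d (-torusDirac D d j) :=
  ⟨j, -1, Or.inr rfl, by rw [neg_smul, one_smul]⟩

lemma part1 (hd : ∀ i, 5 ≤ d i) (ψ : (∀ i, ZMod (d i)) → (∀ i, ZMod (d i))) :
    IsLosslessTranslationTorus D d ψ ↔
      (∃ j, (ψ = fun v => v + torusDirac D d j) ∨
            (ψ = fun v => v - torusDirac D d j)) := by
  constructor
  · exact forward hd
  · rintro ⟨j, h | h⟩ <;> subst h
    · exact shift_lossless hd (unit_dirac j)
    · have : (fun v : ∀ i, ZMod (d i) => v - torusDirac D d j)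
          = fun v => v + (-torusDirac D d j) := by
        funext v; rw [sub_eq_add_neg]
      rw [this]
      exact shift_lossless hd (unit_neg_dirac j)

def shiftEnd (D : ℕ) (d : Fin D → ℕ) (δ : ∀ i, ZMod (d i)) :
    Function.End (∀ i, ZMod (d i)) :=
  fun v => v + δ

lemma shiftEnd_zero : shiftEnd D d 0 = 1 :=
  funext fun v => add_zero v

lemma shiftEnd_mul (a b : ∀ i, ZMod (d i)) :
    shiftEnd D d a * shiftEnd D d b = shiftEnd D d (b + a) := by
  funext v
  show v + b + a = v + (b + a)
  rw [add_assoc]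

def transMonoid (D : ℕ) (d : Fin D → ℕ) : Submonoid (Function.End (∀ i, ZMod (d i))) where
  carrier := {f | ∃ δ : ∀ i, ZMod (d i), f = fun v => v + δ}
  one_mem' := ⟨0, funext fun v => (add_zero v).symm⟩
  mul_mem' := by
    rintro f g ⟨a, ha⟩ ⟨b, hb⟩
    refine ⟨b + a, funext fun v => ?_⟩
    show f (g v) = v + (b + a)
    rw [ha, hb]
    dsimp only
    rw [add_assoc]

lemma part2 (hd : ∀ i, 5 ≤ d i) :
    ((Submonoid.closure
        {ψ : Function.End (∀ i, ZMod (d i)) | IsLosslessTranslationTorus D d ψ} :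
        Set (Function.End (∀ i, ZMod (d i)))) =
      {f : Function.End (∀ i, ZMod (d i)) |
        ∃ δ : ∀ i, ZMod (d i), f = fun v => v + δ}) := by
  set S := {ψ : Function.End (∀ i, ZMod (d i)) | IsLosslessTranslationTorus D d ψ}
  apply Set.Subset.antisymm
  · have hle : Submonoid.closure S ≤ transMonoid D d := by
      rw [Submonoid.closure_le]
      intro ψ hψ
      obtain ⟨j, h | h⟩ := (part1 hd ψ).mp hψ
      · exact ⟨torusDirac D d j, h⟩
      · exact ⟨-torusDirac D d j, by rw [h]; funext v; rw [sub_eq_add_neg]⟩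
    intro f hf
    exact hle hf
  · rintro f ⟨δ, hδ⟩
    subst hδ
    have key : ∀ δ' : ∀ i, ZMod (d i), shiftEnd D d δ' ∈ Submonoid.closure S := by
      have base : ∀ (j : Fin D) (n : ℕ),
          shiftEnd D d (n • torusDirac D d j) ∈ Submonoid.closure S := by
        intro j n
        induction n with
        | zero =>
          rw [zero_smul, shiftEnd_zero]
          exact Submonoid.one_mem _
        | succ n ih =>
          have heq : shiftEnd D d ((n + 1) • torusDirac D d j)
              = shiftEnd D d (torusDirac D d j) * shiftEnd D d (n • torusDirac D d j) := by
            rw [shiftEnd_mul, ← succ_nsmul]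
          rw [heq]
          exact Submonoid.mul_mem _
            (Submonoid.subset_closure (shift_lossless hd (unit_dirac j))) ih
      have hsupp : ∀ s : Finset (Fin D), ∀ δ' : ∀ i, ZMod (d i),
          (∀ i ∉ s, δ' i = 0) → shiftEnd D d δ' ∈ Submonoid.closure S := by
        intro s
        induction s using Finset.induction_on with
        | empty =>
          intro δ' hδ'
          have h0 : δ' = 0 := funext fun i => hδ' i (Finset.notMem_empty i)
          rw [h0, shiftEnd_zero]
          exact Submonoid.one_mem _
        | @insert j s hj ih =>
          intro δ' hδ'
          set w := Function.update δ' j 0 with hwdef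
          have hws : ∀ i ∉ s, w i = 0 := by
            intro i hi
            by_cases hij : i = j
            · subst hij; simp [hwdef]
            · rw [hwdef, Function.update_of_ne hij]
              exact hδ' i (by simp [hij, hi])
          have hvv : δ' = w + (δ' j).val • torusDirac D d j := by
            haveI : NeZero (d j) := ⟨by have := hd j; omega⟩
            funext i
            by_cases hij : i = j
            · subst hij
              rw [Pi.add_apply, hwdef, Function.update_self, zero_add, Pi.smul_apply,
                dirac_apply_self, nsmul_eq_mul, mul_one]
              exact (ZMod.natCast_rightInverse (δ' i)).symm
            · simp [hwdef, Function.update_of_ne hij, torusDirac, hij]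
          have heq : shiftEnd D d δ'
              = shiftEnd D d ((δ' j).val • torusDirac D d j) * shiftEnd D d w := by
            rw [shiftEnd_mul, ← hvv]
          rw [heq]
          exact Submonoid.mul_mem _ (base j _) (ih w hws)
      intro δ'
      exact hsupp Finset.univ δ' (by simp)
    exact key δ

end Stmt16

theorem stmt_16 (D : ℕ) (d : Fin D → ℕ) (hd : ∀ i, 5 ≤ d i) :
    (∀ ψ : (∀ i, ZMod (d i)) → (∀ i, ZMod (d i)),
        IsLosslessTranslationTorus D d ψ ↔
        (∃ j, (ψ = fun v => v + torusDirac D d j) ∨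
              (ψ = fun v => v - torusDirac D d j))) ∧
    ((Submonoid.closure
        {ψ : Function.End (∀ i, ZMod (d i)) | IsLosslessTranslationTorus D d ψ} :
        Set (Function.End (∀ i, ZMod (d i)))) =
      {f : Function.End (∀ i, ZMod (d i)) |
        ∃ δ : ∀ i, ZMod (d i), f = fun v => v + δ}) := by
  exact ⟨fun ψ => Stmt16.part1 hd ψ, Stmt16.part2 hd⟩
end

section
/- On the grid graph of dimensions d∈(ℕ*)^D, the transformation ψ defined by ψ(v) = v + e_i when v + e_i is in the grid and ψ(v) = ⊥ otherwise is a translation (EC and SNP), and its loss equals the product of d[j] over all j ≠ i. -/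
/-! The shift by `e_i` is the restriction to the grid of a translation of `ℤ^D`. Grid adjacency
depends only on coordinate differences, which a translation leaves unchanged, so the shift is
injective and preserves adjacency both ways. The vertices without image are those whose `i`-th
coordinate is already maximal: one slice `{v | v i = d i - 1}` of the grid. -/

open Finset

def gridGraph (D : ℕ) (d : Fin D → ℕ) : SimpleGraph (∀ i, Fin (d i)) :=
  SimpleGraph.fromRel (fun v w =>
    ∃ i, ((w i : ℕ) = (v i : ℕ) + 1 ∧ ∀ j, j ≠ i → w j = v j))

namespace gridGraph

variable {D : ℕ} {d : Fin D → ℕ}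

/-- `w = v + e_i`. -/
def IsStep (i : Fin D) (v w : ∀ k, Fin (d k)) : Prop :=
  (w i : ℕ) = (v i : ℕ) + 1 ∧ ∀ j, j ≠ i → w j = v j

theorem isStep_iff {i : Fin D} {v w : ∀ k, Fin (d k)} :
    IsStep i v w ↔ ∀ j, ((w j : ℕ) : ℤ) = v j + if j = i then 1 else 0 := by
  constructor
  · rintro ⟨hi, hj⟩ j
    by_cases hji : j = i
    · subst hji; simp [hi]
    · simp [hji, hj j hji]
  · intro h
    refine ⟨by have := h i; simp only [↓reduceIte] at this; omega, fun j hji => Fin.ext ?_⟩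
    simpa [hji] using h j

theorem IsStep.ne {i : Fin D} {v w : ∀ k, Fin (d k)} (h : IsStep i v w) : v ≠ w := by
  rintro rfl
  exact absurd h.1 (by omega)

theorem adj_of_isStep {i : Fin D} {v w : ∀ k, Fin (d k)} (h : IsStep i v w) :
    (gridGraph D d).Adj v w :=
  SimpleGraph.fromRel_adj _ v w |>.mpr ⟨h.ne, .inl ⟨i, h⟩⟩

theorem exists_isStep_iff {i : Fin D} {v : ∀ k, Fin (d k)} :
    (∃ w, IsStep i v w) ↔ (v i : ℕ) + 1 < d i := by
  constructor
  · rintro ⟨w, hw, -⟩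
    exact hw ▸ (w i).isLt
  · intro hv
    refine ⟨Function.update v i ⟨v i + 1, hv⟩, by simp, fun j hji => ?_⟩
    exact Function.update_of_ne hji _ _

section Translate

variable {v1 v2 w1 w2 : ∀ k, Fin (d k)} (t : Fin D → ℤ)
  (h1 : ∀ j, ((w1 j : ℕ) : ℤ) = v1 j + t j) (h2 : ∀ j, ((w2 j : ℕ) : ℤ) = v2 j + t j)
include h1 h2

theorem eq_iff_of_translate : v1 = v2 ↔ w1 = w2 := by
  simp only [funext_iff, Fin.ext_iff, ← Int.natCast_inj, h1, h2]
  exact forall_congr' fun j => by omega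

theorem isStep_iff_of_translate {i : Fin D} : IsStep i v1 v2 ↔ IsStep i w1 w2 := by
  simp only [isStep_iff, h1, h2]
  exact forall_congr' fun j => by omega

theorem adj_iff_of_translate : (gridGraph D d).Adj v1 v2 ↔ (gridGraph D d).Adj w1 w2 := by
  change (SimpleGraph.fromRel fun v w => ∃ i, IsStep i v w).Adj v1 v2 ↔
    (SimpleGraph.fromRel fun v w => ∃ i, IsStep i v w).Adj w1 w2
  simp only [SimpleGraph.fromRel_adj, ne_eq, eq_iff_of_translate t h1 h2,
    isStep_iff_of_translate t h1 h2, isStep_iff_of_translate t h2 h1]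

end Translate

theorem card_filter_coord_eq [DecidableEq (∀ k, Fin (d k))] (i : Fin D) (a : Fin (d i)) :
    #{v : ∀ k, Fin (d k) | v i = a} = ∏ j ∈ univ.erase i, d j := by
  simpa [Fintype.piFinset_univ] using
    Fintype.card_filter_piFinset_eq_of_mem (fun j => (univ : Finset (Fin (d j)))) i (mem_univ a)

end gridGraph

theorem stmt_17 (D : ℕ) (d : Fin D → ℕ) (hd : ∀ j, 1 ≤ d j) (i : Fin D)
    (ψ : (∀ k, Fin (d k)) → Option (∀ k, Fin (d k)))
    (hψ : ∀ v w, ψ v = some w ↔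
      ((w i : ℕ) = (v i : ℕ) + 1 ∧ ∀ j, j ≠ i → w j = v j)) :
    IsTranslation (gridGraph D d) ψ ∧
      loss ψ = ∏ j ∈ Finset.univ.erase i, d j := by
  have hshift :
      ∀ v w, ψ v = some w → ∀ j, ((w j : ℕ) : ℤ) = v j + if j = i then 1 else 0 :=
    fun v w h => gridGraph.isStep_iff.mp ((hψ v w).mp h)
  have hinj : IsTransformation ψ := fun v1 v2 w h1 h2 =>
    (gridGraph.eq_iff_of_translate _ (hshift _ _ h1) (hshift _ _ h2)).mpr rfl
  have hEC : IsEC (gridGraph D d) ψ := fun v w h => gridGraph.adj_of_isStep ((hψ v w).mp h)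
  have hSNP : IsSNP (gridGraph D d) ψ := fun v1 v2 w1 w2 h1 h2 =>
    gridGraph.adj_iff_of_translate _ (hshift _ _ h1) (hshift _ _ h2)
  refine ⟨⟨hinj, hEC, hSNP⟩, ?_⟩
  have hlast : d i - 1 < d i := by have := hd i; omega
  have hnone : ∀ v, ψ v = none ↔ v i = ⟨d i - 1, hlast⟩ := fun v => by
    have hstep : (∃ w, ψ v = some w) ↔ (v i : ℕ) + 1 < d i :=
      (exists_congr fun w => hψ v w).trans gridGraph.exists_isStep_iff
    rw [← not_iff_not, ← ne_eq, Option.ne_none_iff_exists', hstep, Fin.ext_iff]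
    have := (v i).isLt
    change _ ↔ ¬(v i : ℕ) = d i - 1
    omega
  simp only [loss, hnone, gridGraph.card_filter_coord_eq]
end
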